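/- arXiv:math/0201287 — 2 statements merged into one kernel-verified Lean document; each statement's English description precedes it below -/
import Mathlib

section
/- Let G be a group with subgroup H, and suppose that for every z ∈ G there exist w ∈ G and an automorphism φ of G with φ(H) = H such that the map z ↦ w·φ(z) exchanges the cosets zH and eH (i.e., w·φ(e) ∈ zH and w·φ(z) ∈ H). Then for every z ∈ G there exists an automorphism ψ of G with ψ(H) = H and ψ(z) ∈ z⁻¹H. -/
lemma conj_map_self {G : Type*} [Group G] (H : Subgroup G) {h : G} (hh : h ∈ H) :
    Subgroup.map (MulAut.conj h).toMonoidHom H = H := by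
  ext x
  simp only [Subgroup.mem_map, MulEquiv.coe_toMonoidHom, MulAut.conj_apply]
  constructor
  · rintro ⟨y, hy, rfl⟩
    exact H.mul_mem (H.mul_mem hh hy) (H.inv_mem hh)
  · intro hx
    exact ⟨h⁻¹ * x * h, by
      have := H.mul_mem (H.mul_mem (H.inv_mem hh) hx) hh
      exact this, by group⟩

/-- If for every `z ∈ G` there are `w ∈ G` and an `H`-preserving automorphism `φ` such that
`x ↦ w·φ(x)` swaps the cosets `zH` and `eH`, then for every `z` there is an `H`-preserving
automorphism `ψ` with `ψ(z) ∈ z⁻¹H`. -/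
theorem stmt8 (G : Type*) [Group G] (H : Subgroup G)
    (hyp : ∀ z : G, ∃ w : G, ∃ φ : G ≃* G,
      Subgroup.map φ.toMonoidHom H = H ∧
      z⁻¹ * (w * φ 1) ∈ H ∧ w * φ z ∈ H) :
    ∀ z : G, ∃ ψ : G ≃* G,
      Subgroup.map ψ.toMonoidHom H = H ∧ z * ψ z ∈ H := by
  intro z
  obtain ⟨w, φ, hmap, h1, h2⟩ := hyp z
  rw [map_one, mul_one] at h1
  refine ⟨φ.trans (MulAut.conj (z⁻¹ * w)), ?_, ?_⟩
  · have : (φ.trans (MulAut.conj (z⁻¹ * w))).toMonoidHom =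
        (MulAut.conj (z⁻¹ * w)).toMonoidHom.comp φ.toMonoidHom := rfl
    rw [this, ← Subgroup.map_map, hmap, conj_map_self H h1]
  · have : z * (φ.trans (MulAut.conj (z⁻¹ * w))) z
        = (w * φ z) * (z⁻¹ * w)⁻¹ := by
      simp [MulAut.conj_apply]
      group
    rw [this]
    exact H.mul_mem h2 (H.inv_mem h1)
end

section
/- Let G be a group with subgroup H. If for every z ∈ G there exists an automorphism φ of G with φ(H) = H and φ(z) = z⁻¹·g for some g ∈ H, then for every z ∈ G there exist w ∈ G and an automorphism ψ of G preserving H such that the map x ↦ w·ψ(x) swaps the cosets eH and zH. -/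
/-- If for every `z ∈ G` there is an `H`-preserving automorphism `φ` with `φ(z) = z⁻¹·g`
for some `g ∈ H`, then for every `z` there are `w` and an `H`-preserving automorphism `ψ`
such that `x ↦ w·ψ(x)` swaps the cosets `eH` and `zH`. -/
theorem stmt9 (G : Type*) [Group G] (H : Subgroup G)
    (hyp : ∀ z : G, ∃ φ : G ≃* G,
      Subgroup.map φ.toMonoidHom H = H ∧ ∃ g ∈ H, φ z = z⁻¹ * g) :
    ∀ z : G, ∃ w : G, ∃ ψ : G ≃* G,
      Subgroup.map ψ.toMonoidHom H = H ∧
      z⁻¹ * (w * ψ 1) ∈ H ∧ w * ψ z ∈ H := by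
  intro z
  obtain ⟨φ, hφH, g, hg, hφz⟩ := hyp z
  refine ⟨z, φ, hφH, ?_, ?_⟩
  · simpa using H.one_mem
  · rw [hφz]; simpa using hg
end
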